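/- Let σ ∈ S_n with Mc σ = d₁d₂⋯d_n, and let k ∈ {1,…,n} satisfy: (C1) d₁ ≤ d₂ ≤ ⋯ ≤ d_{k−1}; (C2) d_{k−1} > d_k; (C3) d_k ≤ d₁; (C4) in σ the letter k occurs to the right of every letter i < k. Then τ = Mc⁻¹(d_k d₁ d₂ ⋯ d_{k−1} d_{k+1} ⋯ d_n) satisfies Ligne σ = Ligne τ. -/

import Mathlib

/-- Descent set (ligne of route) of a word, with 1-based positions. -/
def ligne (w : List ℕ) : Finset ℕ :=
  (Finset.Icc 1 (w.length - 1)).filter (fun i => w.getD (i-1) 0 > w.getD i 0)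

/-- Major index of a word. -/
def maj (w : List ℕ) : ℕ := ∑ i ∈ ligne w, i

/-- Inversion number of a word. -/
def inv (w : List ℕ) : ℕ :=
  ((Finset.range w.length ×ˢ Finset.range w.length).filter
    (fun p => p.1 < p.2 ∧ w.getD p.1 0 > w.getD p.2 0)).card

/-- `w` is (the one-line word of) a permutation of `1,…,n`. -/
def IsPermWord (n : ℕ) (w : List ℕ) : Prop := w.Perm (List.range' 1 n)

/-- One-line word of `σ ∈ S_n` with values in `1,…,n`. -/
def toWord {n : ℕ} (σ : Equiv.Perm (Fin n)) : List ℕ := List.ofFn (fun i => (σ i : ℕ) + 1)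

/-- Subexcedent word: `0 ≤ d_i ≤ i-1` (1-based), i.e. `d_i ≤ i` for 0-based `i`. -/
def Subexcedent (w : List ℕ) : Prop := ∀ i < w.length, w.getD i 0 ≤ i

/-- Subdiagonal word: `0 ≤ d_i ≤ n-i` (1-based). -/
def Subdiagonal (w : List ℕ) : Prop := ∀ i < w.length, w.getD i 0 + i + 1 ≤ w.length

/-- Lehmer code: `d_i = #{j < i : x_j > x_i}`. -/
def invcode (w : List ℕ) : List ℕ :=
  (List.range w.length).map (fun i => ((Finset.range i).filter (fun j => w.getD j 0 > w.getD i 0)).card)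

/-- `Lc`-code: `d_i = #{j > i : x_i > x_j}`. -/
def lc (w : List ℕ) : List ℕ :=
  (List.range w.length).map (fun i => ((Finset.Ico (i+1) w.length).filter (fun j => w.getD i 0 > w.getD j 0)).card)

/-- Major index code: `d_i = maj(σ|_i) - maj(σ|_{i-1})`, where `σ|_i` erases letters `> i`. -/
def majcode (w : List ℕ) : List ℕ :=
  (List.range w.length).map (fun i => maj (w.filter (· ≤ i+1)) - maj (w.filter (· ≤ i)))

/-- `Mc`-code: `d_i = maj(σ^{(i)}) - maj(σ^{(i+1)})`, where `σ^{(i)}` erases letters `< i`. -/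
def mc (w : List ℕ) : List ℕ :=
  (List.range w.length).map (fun i => maj (w.filter (fun x => i+1 ≤ x)) - maj (w.filter (fun x => i+2 ≤ x)))

/-- One-line word of the inverse permutation. -/
def invWord (w : List ℕ) : List ℕ :=
  (List.range w.length).map (fun i => w.idxOf (i+1) + 1)

/-- `Ic σ = Lc (σ⁻¹)`. -/
def ic (w : List ℕ) : List ℕ := lc (invWord w)

/-- Inverse ligne of route. -/
def iligne (w : List ℕ) : Finset ℕ := ligne (invWord w)

/-- Complement map `δ` on codes: `δ(d₁⋯d_n) = (0-d₁)(1-d₂)⋯(n-1-d_n)`. -/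
def deltaC (w : List ℕ) : List ℕ :=
  (List.range w.length).map (fun i => i - w.getD i 0)

/-- Nondecreasing rearrangement of a word. -/
def sortW (w : List ℕ) : List ℕ := List.insertionSort (· ≤ ·) w

/-- Set-valued statistic `El = Ligne ∘ Mc⁻¹` on subdiagonal words. -/
noncomputable def El (d : List ℕ) : Finset ℕ := by
  classical
  exact if h : ∃ w, IsPermWord d.length w ∧ mc w = d then ligne h.choose else ∅

/-- Set-valued statistic `Eul = Ligne ∘ Majcode⁻¹` on subexcedent words. -/
noncomputable def Eul (d : List ℕ) : Finset ℕ := by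
  classical
  exact if h : ∃ w, IsPermWord d.length w ∧ majcode w = d then ligne h.choose else ∅

/-!
`Mc σ` records, for `m = n, …, 1`, how much the major index grows when the letter `m` is inserted
into `σ^{(m+1)}`. Inserting a new smallest letter at slot `j` into a word with descent set `D`
gives the descent set `ligneInsMin D j` and raises the major index by `majInc D j`, and `majInc D`
is injective; so the descent set of `σ^{(m)}` is determined by that of `σ^{(m+1)}` and by `d_m`.

By (C4), `σ = P k S` with every letter of `S` larger than `k`. By (C2), the last letter of `P` that
exceeds `k` also exceeds the first letter of `S`, so inserting `k` in front of `S` only shifts the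
descents of `P S` to its right (`shiftAbove`). Hence `τ` and `σ` agree above `k`; for `M < k`,
`τ^{(M+1)}` has the descent set of `σ^{(M)}` with `k` erased; and the letter `1` of `τ`, inserted
with increase `d_k = #Ligne S`, recreates exactly the shift caused by `k`.
-/

namespace McCode

open Finset

section Descents

variable (D : Finset ℕ)

/-- The descent set after inserting at slot `q` a letter that neither creates nor destroys a
descent. -/
def shiftAbove (q : ℕ) : Finset ℕ := D.image fun i => if i ≤ q then i else i + 1

/-- The descent set after inserting a new smallest letter at (0-based) slot `j` into a word with
descent set `D`. -/
def ligneInsMin (j : ℕ) : Finset ℕ := (insert j (shiftAbove D j)).erase 0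

/-- The increase of the major index caused by that insertion. -/
def majInc (j : ℕ) : ℕ := (if j ∈ D then 0 else j) + #(D.filter (j < ·))

variable {D}

theorem mem_shiftAbove {q t : ℕ} :
    t ∈ shiftAbove D q ↔ (t ≤ q ∧ t ∈ D) ∨ (q + 1 < t ∧ t - 1 ∈ D) := by
  simp only [shiftAbove, mem_image]
  constructor
  · rintro ⟨i, hi, rfl⟩
    split_ifs with h
    · exact Or.inl ⟨h, hi⟩
    · exact Or.inr ⟨by omega, by simpa using hi⟩
  · rintro (⟨ht, hD⟩ | ⟨ht, hD⟩)
    · exact ⟨t, hD, if_pos ht⟩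
    · exact ⟨t - 1, hD, by rw [if_neg (by omega)]; omega⟩

theorem shiftAbove_injOn (q : ℕ) :
    Set.InjOn (fun i => if i ≤ q then i else i + 1) (D : Set ℕ) := by
  intro i _ i' _ h
  simp only at h
  split_ifs at h <;> omega

theorem sum_shiftAbove (q : ℕ) :
    ∑ i ∈ shiftAbove D q, i = ∑ i ∈ D, i + #(D.filter (q < ·)) := by
  rw [shiftAbove, sum_image (shiftAbove_injOn q), card_filter, ← sum_add_distrib]
  refine sum_congr rfl fun i _ => ?_
  split_ifs <;> omega

theorem card_filter_shiftAbove {j q : ℕ} (hj : j ≤ q) :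
    #((shiftAbove D q).filter (j < ·)) = #(D.filter (j < ·)) := by
  rw [shiftAbove, filter_image, card_image_of_injOn ((shiftAbove_injOn q).mono (filter_subset _ _))]
  congr 1
  refine filter_congr fun i _ => ?_
  split_ifs <;> omega

theorem mem_shiftAbove_of_le {j q : ℕ} (hj : j ≤ q) : j ∈ shiftAbove D q ↔ j ∈ D := by
  rw [mem_shiftAbove]
  exact ⟨by rintro (⟨-, h⟩ | ⟨h, -⟩); exacts [h, by omega], fun h => Or.inl ⟨hj, h⟩⟩

theorem majInc_shiftAbove {j q : ℕ} (hj : j ≤ q) : majInc (shiftAbove D q) j = majInc D j := by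
  simp only [majInc, mem_shiftAbove_of_le hj, card_filter_shiftAbove hj]

theorem sum_ligneInsMin (j : ℕ) : ∑ i ∈ ligneInsMin D j, i = ∑ i ∈ D, i + majInc D j := by
  rw [ligneInsMin, sum_erase _ (f := fun i => i) (a := 0) rfl, majInc]
  by_cases hj : j ∈ D
  · rw [insert_eq_of_mem ((mem_shiftAbove_of_le le_rfl).2 hj), sum_shiftAbove, if_pos hj]
    omega
  · rw [sum_insert (mt (mem_shiftAbove_of_le le_rfl).1 hj), sum_shiftAbove, if_neg hj]
    omega

theorem card_filter_ligneInsMin (j : ℕ) :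
    #((ligneInsMin D j).filter (j < ·)) = #(D.filter (j < ·)) := by
  rw [← card_filter_shiftAbove (D := D) le_rfl]
  congr 1
  ext t
  simp only [ligneInsMin, mem_filter, mem_erase, mem_insert]
  constructor
  · rintro ⟨⟨-, rfl | h⟩, ht⟩
    exacts [absurd ht (lt_irrefl _), ⟨h, ht⟩]
  · rintro ⟨h, ht⟩
    exact ⟨⟨by omega, Or.inr h⟩, ht⟩

theorem card_filter_lt_eq_add {j j' : ℕ} (h : j ≤ j') :
    #(D.filter (j < ·)) = #(D.filter fun i => j < i ∧ i ≤ j') + #(D.filter (j' < ·)) := by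
  rw [← card_filter_add_card_filter_not (s := D.filter (j < ·)) (· ≤ j'), filter_filter,
    filter_filter]
  congr 2
  refine filter_congr fun i _ => ?_
  omega

theorem card_filter_Ioc_le (j j' : ℕ) : #(D.filter fun i => j < i ∧ i ≤ j') ≤ j' - j :=
  (card_le_card fun t ht => by simp only [mem_filter] at ht; simpa using ht.2).trans
    (Nat.card_Ioc j j').le

theorem majInc_le {j j' : ℕ} (h : j ≤ j') : majInc D j ≤ j' + #(D.filter (j' < ·)) := by
  have := card_filter_lt_eq_add (D := D) h
  have := card_filter_Ioc_le (D := D) j j'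
  unfold majInc
  split_ifs <;> omega

theorem majInc_ne_of_lt {j j' : ℕ} (h : j < j') : majInc D j ≠ majInc D j' := by
  have hsplit := card_filter_lt_eq_add (D := D) h.le
  unfold majInc
  by_cases hj' : j' ∈ D
  · have : 0 < #(D.filter fun i => j < i ∧ i ≤ j') := card_pos.2 ⟨j', by simp [hj', h]⟩
    split_ifs <;> omega
  · have : #(D.filter fun i => j < i ∧ i ≤ j') ≤ j' - j - 1 := by
      refine (card_le_card fun t ht => ?_).trans (Nat.card_Ioo j j').le
      simp only [mem_filter] at ht
      have : t ≠ j' := fun e => hj' (e ▸ ht.1)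
      simp only [mem_Ioo]
      omega
    split_ifs <;> omega

theorem majInc_injective (D : Finset ℕ) : Function.Injective (majInc D) := by
  intro j j' h
  rcases lt_trichotomy j j' with hlt | heq | hgt
  · exact absurd h (majInc_ne_of_lt hlt)
  · exact heq
  · exact absurd h.symm (majInc_ne_of_lt hgt)

theorem majInc_ligneInsMin_le {j j₀ : ℕ} (h : j ≤ j₀) :
    majInc (ligneInsMin D j₀) j ≤ j₀ + #(D.filter (j₀ < ·)) :=
  (majInc_le h).trans_eq (by rw [card_filter_ligneInsMin])

theorem shiftAbove_congr {s q : ℕ} (h : ∀ i ∈ D, s < i ↔ q < i) :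
    shiftAbove D s = shiftAbove D q :=
  image_congr fun i hi => by
    have := h i hi
    split_ifs <;> omega

theorem ligneInsMin_eq_shiftAbove (hD : 0 ∉ D) {s : ℕ} (hs : s = 0 ∨ s ∈ D) :
    ligneInsMin D s = shiftAbove D s := by
  have h0 : 0 ∉ shiftAbove D s := by
    rw [mem_shiftAbove]
    rintro (⟨-, h⟩ | ⟨h, -⟩)
    exacts [hD h, by omega]
  rcases hs with rfl | hs
  · rw [ligneInsMin, erase_insert h0]
  · rw [ligneInsMin, insert_eq_of_mem ((mem_shiftAbove_of_le le_rfl).2 hs),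
      erase_eq_of_notMem h0]

/-- The slot is the last descent at or before `q`, or `0` if there is none. -/
theorem exists_majInc_eq_and_ligneInsMin_eq (hD : 0 ∉ D) (q : ℕ) :
    ∃ s, majInc D s = #(D.filter (q < ·)) ∧ ligneInsMin D s = shiftAbove D q := by
  set T := insert 0 (D.filter (· ≤ q))
  set s := T.max' (insert_nonempty _ _)
  have hs : s = 0 ∨ (s ∈ D ∧ s ≤ q) := by
    have := max'_mem T (insert_nonempty _ _)
    simpa only [T, mem_insert, mem_filter] using this
  have hbetween : ∀ i ∈ D, s < i ↔ q < i := fun i hi => by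
    have : i ≤ q → i ≤ s := fun hiq => le_max' T i (by simp [T, hi, hiq])
    omega
  refine ⟨s, ?_, ?_⟩
  · have : (if s ∈ D then 0 else s) = 0 := by rcases hs with h | h <;> simp [h]
    rw [majInc, this, zero_add, filter_congr hbetween]
  · rw [ligneInsMin_eq_shiftAbove hD (hs.imp_right And.left), shiftAbove_congr hbetween]

end Descents

section Insertion

variable {X Y : List ℕ} {a : ℕ}

theorem mem_ligne {w : List ℕ} {i : ℕ} :
    i ∈ ligne w ↔ 1 ≤ i ∧ i < w.length ∧ w.getD i 0 < w.getD (i - 1) 0 := by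
  simp only [ligne, mem_filter, mem_Icc]
  omega

theorem zero_notMem_ligne (w : List ℕ) : 0 ∉ ligne w := by
  simp [mem_ligne]

theorem getD_append_cons_of_lt {i : ℕ} (h : i < X.length) :
    (X ++ a :: Y).getD i 0 = (X ++ Y).getD i 0 := by
  rw [List.getD_append _ _ _ _ h, List.getD_append _ _ _ _ h]

theorem getD_append_cons_of_gt {i : ℕ} (h : X.length < i) :
    (X ++ a :: Y).getD i 0 = (X ++ Y).getD (i - 1) 0 := by
  obtain ⟨r, rfl⟩ : ∃ r, i = X.length + r + 1 := ⟨i - X.length - 1, by omega⟩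
  rw [List.getD_append_right _ _ _ _ (by omega), List.getD_append_right _ _ _ _ (by omega)]
  simp [show X.length + r + 1 - X.length = r + 1 by omega]

theorem length_mem_ligne_append_iff :
    X.length ∈ ligne (X ++ Y) ↔ ∃ x ∈ X.getLast?, ∃ y ∈ Y.head?, y < x := by
  rcases X.eq_nil_or_concat' with rfl | ⟨B, x, rfl⟩ <;> cases Y <;> simp [mem_ligne]

theorem mem_ligne_append_cons (hY : ∀ y ∈ Y, a < y) {i : ℕ} :
    i ∈ ligne (X ++ a :: Y) ↔ (i < X.length ∧ i ∈ ligne (X ++ Y)) ∨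
      (i = X.length ∧ ∃ x ∈ X.getLast?, a < x) ∨
      (X.length + 1 < i ∧ i - 1 ∈ ligne (X ++ Y)) := by
  have hlen : (X ++ a :: Y).length = (X ++ Y).length + 1 := by simp; omega
  have hXY : X.length ≤ (X ++ Y).length := by simp
  rcases lt_trichotomy i X.length with h | rfl | h
  · rw [mem_ligne, mem_ligne, hlen, getD_append_cons_of_lt h,
      getD_append_cons_of_lt (show i - 1 < X.length by omega)]
    constructor
    · exact fun hi => Or.inl ⟨h, by omega⟩
    · rintro (⟨-, hi⟩ | ⟨rfl, -⟩ | ⟨h', -⟩) <;> omega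
  · rcases X.eq_nil_or_concat' with rfl | ⟨B, x, rfl⟩ <;> simp [mem_ligne]
  · obtain rfl | h' : i = X.length + 1 ∨ X.length + 1 < i := by omega
    · refine iff_of_false (fun hi => ?_) (by omega)
      rw [mem_ligne, hlen, getD_append_cons_of_gt h, Nat.add_sub_cancel] at hi
      have hY0 : 0 < Y.length := by simp at hi; omega
      have hmem : (X ++ Y).getD X.length 0 ∈ Y := by
        rw [List.getD_append_right _ _ _ _ le_rfl, Nat.sub_self, List.getD_eq_getElem _ _ hY0]
        exact List.getElem_mem hY0
      have ha : (X ++ a :: Y).getD X.length 0 = a := by simp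
      have := hY _ hmem
      omega
    · simp only [mem_ligne]
      rw [hlen, getD_append_cons_of_gt h,
        getD_append_cons_of_gt (show X.length < i - 1 by omega)]
      constructor
      · exact fun hi => Or.inr (Or.inr ⟨h', by omega⟩)
      · rintro (⟨h'', -⟩ | ⟨rfl, -⟩ | ⟨-, hi⟩) <;> omega

theorem ligne_append_cons_of_forall_lt (ha : ∀ z ∈ X ++ Y, a < z) :
    ligne (X ++ a :: Y) = ligneInsMin (ligne (X ++ Y)) X.length := by
  have hlast : (∃ x ∈ X.getLast?, a < x) ↔ X.length ≠ 0 := by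
    rcases X.eq_nil_or_concat' with rfl | ⟨B, x, rfl⟩
    · simp
    · simpa using ha x (by simp)
  have h0 : ∀ i ∈ ligne (X ++ Y), i ≠ 0 := fun i hi e => zero_notMem_ligne _ (e ▸ hi)
  ext i
  rw [mem_ligne_append_cons (fun y hy => ha y (by simp [hy])), hlast, ligneInsMin, mem_erase,
    mem_insert, mem_shiftAbove]
  constructor
  · rintro (⟨hi, hD⟩ | ⟨rfl, hX⟩ | ⟨hi, hD⟩)
    · exact ⟨h0 i hD, Or.inr (Or.inl ⟨hi.le, hD⟩)⟩
    · exact ⟨hX, Or.inl rfl⟩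
    · exact ⟨by omega, Or.inr (Or.inr ⟨hi, hD⟩)⟩
  · rintro ⟨hi0, rfl | ⟨hi, hD⟩ | ⟨hi, hD⟩⟩
    · exact Or.inr (Or.inl ⟨rfl, hi0⟩)
    · rcases hi.lt_or_eq with hi | rfl
      exacts [Or.inl ⟨hi, hD⟩, Or.inr (Or.inl ⟨rfl, hi0⟩)]
    · exact Or.inr (Or.inr ⟨hi, hD⟩)

theorem ligne_append_cons_eq_shiftAbove (hY : ∀ y ∈ Y, a < y)
    (hXY : ∀ x ∈ X.getLast?, a < x → ∃ y ∈ Y.head?, y < x) :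
    ligne (X ++ a :: Y) = shiftAbove (ligne (X ++ Y)) X.length := by
  have hjunction : (∃ x ∈ X.getLast?, a < x) ↔ X.length ∈ ligne (X ++ Y) := by
    rw [length_mem_ligne_append_iff]
    constructor
    · rintro ⟨x, hx, hax⟩
      exact ⟨x, hx, hXY x hx hax⟩
    · rintro ⟨x, hx, y, hy, hyx⟩
      exact ⟨x, hx, (hY y (List.mem_of_mem_head? hy)).trans hyx⟩
  ext i
  rw [mem_ligne_append_cons hY, hjunction, mem_shiftAbove]
  constructor
  · rintro (⟨hi, hD⟩ | ⟨rfl, hD⟩ | h)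
    exacts [Or.inl ⟨hi.le, hD⟩, Or.inl ⟨le_rfl, hD⟩, Or.inr h]
  · rintro (⟨hi, hD⟩ | h)
    · rcases hi.lt_or_eq with hi | rfl
      exacts [Or.inl ⟨hi, hD⟩, Or.inr (Or.inl ⟨rfl, hD⟩)]
    · exact Or.inr (Or.inr h)

theorem maj_append_cons_of_forall_lt (ha : ∀ z ∈ X ++ Y, a < z) :
    maj (X ++ a :: Y) = maj (X ++ Y) + majInc (ligne (X ++ Y)) X.length := by
  rw [maj, maj, ligne_append_cons_of_forall_lt ha, sum_ligneInsMin]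

theorem maj_append_cons_of_head_lt (hY : ∀ y ∈ Y, a < y)
    (hXY : ∀ x ∈ X.getLast?, a < x → ∃ y ∈ Y.head?, y < x) :
    maj (X ++ a :: Y) = maj (X ++ Y) + #((ligne (X ++ Y)).filter (X.length < ·)) := by
  rw [maj, maj, ligne_append_cons_eq_shiftAbove hY hXY, sum_shiftAbove]

/-- `majInc` is injective, so the increase of the major index recovers the slot. -/
theorem ligne_append_cons_eq_of_maj_sub_eq {X' Y' : List ℕ} {a' : ℕ}
    (ha : ∀ z ∈ X ++ Y, a < z) (ha' : ∀ z ∈ X' ++ Y', a' < z)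
    (hD : ligne (X ++ Y) = ligne (X' ++ Y'))
    (hmaj : maj (X ++ a :: Y) - maj (X ++ Y) = maj (X' ++ a' :: Y') - maj (X' ++ Y')) :
    ligne (X ++ a :: Y) = ligne (X' ++ a' :: Y') := by
  rw [maj_append_cons_of_forall_lt ha, maj_append_cons_of_forall_lt ha', Nat.add_sub_cancel_left,
    Nat.add_sub_cancel_left, hD] at hmaj
  rw [ligne_append_cons_of_forall_lt ha, ligne_append_cons_of_forall_lt ha', hD,
    majInc_injective _ hmaj]

theorem ligne_append_cons_eq_shiftAbove_of_maj_sub_eq (ha : ∀ z ∈ X ++ Y, a < z) {q : ℕ}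
    (hmaj : maj (X ++ a :: Y) - maj (X ++ Y) = #((ligne (X ++ Y)).filter (q < ·))) :
    ligne (X ++ a :: Y) = shiftAbove (ligne (X ++ Y)) q := by
  obtain ⟨s, hs, hsl⟩ := exists_majInc_eq_and_ligneInsMin_eq (zero_notMem_ligne (X ++ Y)) q
  rw [maj_append_cons_of_forall_lt ha, Nat.add_sub_cancel_left, ← hs] at hmaj
  rw [ligne_append_cons_of_forall_lt ha, majInc_injective _ hmaj, hsl]

theorem mem_ligne_append_of_lt {i : ℕ} (h : X.length < i) :
    i ∈ ligne (X ++ Y) ↔ i - X.length ∈ ligne Y := by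
  rw [mem_ligne, mem_ligne, List.getD_append_right _ _ _ _ h.le,
    List.getD_append_right _ _ _ _ (by omega : X.length ≤ i - 1), List.length_append,
    show i - 1 - X.length = i - X.length - 1 by omega]
  omega

theorem card_filter_ligne_append (X Y : List ℕ) :
    #((ligne (X ++ Y)).filter (X.length < ·)) = #(ligne Y) := by
  refine card_nbij' (· - X.length) (· + X.length) (fun i hi => ?_) (fun i hi => ?_)
    (fun i hi => ?_) (fun i hi => ?_)
  · simp only [mem_coe, mem_filter] at hi
    exact (mem_ligne_append_of_lt hi.2).1 hi.1
  · have := zero_notMem_ligne Y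
    have hi0 : i ≠ 0 := fun e => this (e ▸ hi)
    simp only [mem_coe, mem_filter]
    exact ⟨(mem_ligne_append_of_lt (by omega)).2 (by simpa using hi), by omega⟩
  · simp only [mem_coe, mem_filter] at hi
    simp only
    omega
  · simp

end Insertion

section Words

theorem filter_le_eq_filter_succ_le {l : List ℕ} {m : ℕ} (h : m ∉ l) :
    l.filter (m ≤ ·) = l.filter (m + 1 ≤ ·) :=
  List.filter_congr fun x hx => by
    have : x ≠ m := fun e => h (e ▸ hx)
    simp only [decide_eq_decide]
    omega

theorem filter_filter_le_of_le {l : List ℕ} {m m' : ℕ} (h : m ≤ m') :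
    (l.filter (m ≤ ·)).filter (m' ≤ ·) = l.filter (m' ≤ ·) := by
  rw [List.filter_filter]
  exact List.filter_congr fun x _ => by by_cases hx : m' ≤ x <;> simp [hx]; omega

theorem lt_of_mem_filter_succ_le {l : List ℕ} {m z : ℕ} (h : z ∈ l.filter (m + 1 ≤ ·)) :
    m < z := by
  simpa using (List.mem_filter.1 h).2

theorem exists_filter_le_eq_append_cons_of_nodup {l : List ℕ} (hl : l.Nodup) {m : ℕ}
    (hm : m ∈ l) :
    ∃ X Y, l.filter (m ≤ ·) = X ++ m :: Y ∧ l.filter (m + 1 ≤ ·) = X ++ Y := by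
  obtain ⟨A, B, rfl⟩ := List.append_of_mem hm
  rw [List.nodup_middle, List.nodup_cons, List.mem_append, not_or] at hl
  refine ⟨A.filter (m + 1 ≤ ·), B.filter (m + 1 ≤ ·), ?_, ?_⟩
  · rw [List.filter_append, List.filter_cons_of_pos (by simp), filter_le_eq_filter_succ_le hl.1.1,
      filter_le_eq_filter_succ_le hl.1.2]
  · rw [List.filter_append, List.filter_cons_of_neg (by simp)]

theorem mem_getLast?_filter {l : List ℕ} {p : ℕ → Bool} {x : ℕ} (hx : x ∈ l.getLast?)
    (hp : p x) :
    x ∈ (l.filter p).getLast? := by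
  obtain ⟨B, rfl⟩ := List.getLast?_eq_some_iff.1 hx
  simp [List.filter_append, hp]

theorem length_mc (v : List ℕ) : (mc v).length = v.length := by
  simp [mc]

theorem mc_getD_sub_one {v : List ℕ} {m : ℕ} (h1 : 1 ≤ m) (hm : m ≤ v.length) :
    (mc v).getD (m - 1) 0 = maj (v.filter (m ≤ ·)) - maj (v.filter (m + 1 ≤ ·)) := by
  obtain ⟨i, rfl⟩ : ∃ i, m = i + 1 := ⟨m - 1, by omega⟩
  rw [mc, List.getD_eq_getElem?_getD, List.getElem?_map, List.getElem?_range (by omega)]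
  rfl

theorem getD_cons_take_append_drop {d : List ℕ} {k i : ℕ} (hk1 : 1 ≤ k) (hk : k ≤ d.length)
    (hi : 1 ≤ i) :
    (d.getD (k - 1) 0 :: (d.take (k - 1) ++ d.drop k)).getD i 0
      = d.getD (if i < k then i - 1 else i) 0 := by
  obtain ⟨j, rfl⟩ : ∃ j, i = j + 1 := ⟨i - 1, by omega⟩
  rw [List.getD_cons_succ]
  split_ifs with h
  · rw [List.getD_append _ _ _ _ (by simp; omega)]
    simp [List.getD_eq_getElem?_getD, show j < k - 1 by omega]
  · rw [List.getD_append_right _ _ _ _ (by simp; omega)]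
    simp only [List.getD_eq_getElem?_getD, List.getElem?_drop, List.length_take]
    congr 2
    omega

end Words

section PermWord

variable {n : ℕ} {v : List ℕ}

theorem _root_.IsPermWord.length_eq (hv : IsPermWord n v) : v.length = n := by
  rw [List.Perm.length_eq hv, List.length_range']

theorem _root_.IsPermWord.mem_iff (hv : IsPermWord n v) {x : ℕ} :
    x ∈ v ↔ 1 ≤ x ∧ x ≤ n := by
  rw [List.Perm.mem_iff hv, List.mem_range'_1]
  omega

theorem _root_.IsPermWord.nodup (hv : IsPermWord n v) : v.Nodup :=
  (List.Perm.nodup_iff hv).2 List.nodup_range'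

theorem _root_.IsPermWord.filter_eq_nil (hv : IsPermWord n v) {M : ℕ} (hM : n < M) :
    v.filter (M ≤ ·) = [] :=
  List.filter_eq_nil_iff.2 fun x hx => by simpa using (hv.mem_iff.1 hx).2.trans_lt hM

theorem _root_.IsPermWord.filter_one_le (hv : IsPermWord n v) : v.filter (1 ≤ ·) = v :=
  List.filter_eq_self.2 fun x hx => by simpa using (hv.mem_iff.1 hx).1

theorem _root_.IsPermWord.exists_filter_le_eq_append_cons (hv : IsPermWord n v) {m : ℕ}
    (h1 : 1 ≤ m) (hm : m ≤ n) :
    ∃ X Y, v.filter (m ≤ ·) = X ++ m :: Y ∧ v.filter (m + 1 ≤ ·) = X ++ Y ∧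
      (∀ z ∈ X ++ Y, m < z) ∧ (mc v).getD (m - 1) 0 = maj (X ++ m :: Y) - maj (X ++ Y) := by
  obtain ⟨X, Y, h, h'⟩ :=
    exists_filter_le_eq_append_cons_of_nodup hv.nodup (hv.mem_iff.2 ⟨h1, hm⟩)
  refine ⟨X, Y, h, h', fun z hz => lt_of_mem_filter_succ_le (h' ▸ hz), ?_⟩
  rw [mc_getD_sub_one h1 (hv.length_eq ▸ hm), h, h']

theorem ligne_filter_eq_of_mc_getD_eq {w : List ℕ} (hv : IsPermWord n v) (hw : IsPermWord n w)
    {M : ℕ} (hM : 1 ≤ M)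
    (h : ∀ m, M ≤ m → m ≤ n → (mc v).getD (m - 1) 0 = (mc w).getD (m - 1) 0) :
    ligne (v.filter (M ≤ ·)) = ligne (w.filter (M ≤ ·)) := by
  rcases lt_or_ge (n + 1) M with hnM | hMn
  · rw [hv.filter_eq_nil (by omega), hw.filter_eq_nil (by omega)]
  induction hMn using Nat.decreasingInduction with
  | self => rw [hv.filter_eq_nil (by omega), hw.filter_eq_nil (by omega)]
  | of_succ M hMn ih =>
    obtain ⟨X, Y, hX, hXY, hlt, hmc⟩ := hv.exists_filter_le_eq_append_cons hM (by omega)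
    obtain ⟨X', Y', hX', hXY', hlt', hmc'⟩ := hw.exists_filter_le_eq_append_cons hM (by omega)
    rw [hX, hX']
    refine ligne_append_cons_eq_of_maj_sub_eq hlt hlt' ?_ ?_
    · rw [← hXY, ← hXY']
      exact ih (by omega) fun m hm => h m (by omega)
    · rw [← hmc, ← hmc']
      exact h M le_rfl (by omega)

end PermWord

section Split

variable {n : ℕ} {P S τ : List ℕ} {k : ℕ}

theorem notMem_left (hσ : IsPermWord n (P ++ k :: S)) : k ∉ P := fun h =>
  (List.nodup_cons.1 (List.nodup_middle.1 hσ.nodup)).1 (List.mem_append_left _ h)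

theorem nodup_left (hσ : IsPermWord n (P ++ k :: S)) : P.Nodup :=
  (List.nodup_append.1 hσ.nodup).1

theorem forall_lt_of_idxOf_lt (hσ : IsPermWord n (P ++ k :: S))
    (h : ∀ i, 1 ≤ i → i < k → (P ++ k :: S).idxOf i < (P ++ k :: S).idxOf k) :
    ∀ y ∈ S, k < y := by
  intro y hy
  by_contra hyk
  have hnd := List.nodup_middle.1 hσ.nodup
  rw [List.nodup_cons] at hnd
  have hyP : y ∉ P := fun hyP => List.disjoint_of_nodup_append hnd.2 hyP hy
  have hyk' : y ≠ k := fun e => hnd.1 (List.mem_append_right _ (e ▸ hy))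
  have hy1 := ((hσ.mem_iff (x := y)).1 (by simp [hy])).1
  have := h y hy1 (by omega)
  rw [List.idxOf_append_of_notMem hyP, List.idxOf_append_of_notMem (notMem_left hσ),
    List.idxOf_cons_self] at this
  omega

theorem mem_left_of_lt (hσ : IsPermWord n (P ++ k :: S)) (hS : ∀ y ∈ S, k < y) {m : ℕ}
    (h1 : 1 ≤ m) (hm : m < k) : m ∈ P := by
  have hkn := ((hσ.mem_iff (x := k)).1 (by simp)).2
  rcases List.mem_append.1 (hσ.mem_iff.2 ⟨h1, by omega⟩) with h | h
  · exact h
  · rcases List.mem_cons.1 h with rfl | h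
    · omega
    · exact absurd (hS m h) (by omega)

theorem filter_append_cons_of_le (hS : ∀ y ∈ S, k < y) {m : ℕ} (hm : m ≤ k) :
    (P ++ k :: S).filter (m ≤ ·) = P.filter (m ≤ ·) ++ k :: S := by
  rw [List.filter_append, List.filter_cons_of_pos (by simpa using hm),
    (List.filter_eq_self (l := S)).2 fun y hy => by simpa using (hm.trans_lt (hS y hy)).le]

theorem filter_append_cons_succ (hS : ∀ y ∈ S, k < y) :
    (P ++ k :: S).filter (k + 1 ≤ ·) = P.filter (k + 1 ≤ ·) ++ S := by
  rw [List.filter_append, List.filter_cons_of_neg (by simp),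
    (List.filter_eq_self (l := S)).2 fun y hy => by simpa using hS y hy]

theorem exists_head_lt_of_filter_eq
    (hK : ∀ x ∈ (P.filter (k + 1 ≤ ·)).getLast?, ∃ y ∈ S.head?, y < x)
    {A : List ℕ} (hA : A.filter (k + 1 ≤ ·) = P.filter (k + 1 ≤ ·)) :
    ∀ x ∈ A.getLast?, k < x → ∃ y ∈ S.head?, y < x :=
  fun x hx hkx => hK x (hA ▸ mem_getLast?_filter hx (by simpa using hkx))

theorem mc_getD_sub_one_append_cons (hσ : IsPermWord n (P ++ k :: S)) (hS : ∀ y ∈ S, k < y)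
    (hk1 : 1 ≤ k) :
    (mc (P ++ k :: S)).getD (k - 1) 0
      = maj (P.filter (k + 1 ≤ ·) ++ k :: S) - maj (P.filter (k + 1 ≤ ·) ++ S) := by
  rw [mc_getD_sub_one hk1 (by rw [hσ.length_eq]; exact ((hσ.mem_iff (x := k)).1 (by simp)).2),
    filter_append_cons_of_le hS le_rfl, filter_append_cons_succ hS,
    filter_le_eq_filter_succ_le (notMem_left hσ)]

theorem exists_filter_left_eq_append_cons (hσ : IsPermWord n (P ++ k :: S))
    (hS : ∀ y ∈ S, k < y)
    {M : ℕ} (h1 : 1 ≤ M) (hM : M < k) :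
    ∃ B C, P.filter (M ≤ ·) = B ++ M :: C ∧ P.filter (M + 1 ≤ ·) = B ++ C ∧
      (∀ z ∈ B ++ C, M < z) ∧
      (mc (P ++ k :: S)).getD (M - 1) 0
        = maj (B ++ M :: (C ++ k :: S)) - maj (B ++ (C ++ k :: S)) := by
  obtain ⟨B, C, hB, hBC⟩ :=
    exists_filter_le_eq_append_cons_of_nodup (nodup_left hσ) (mem_left_of_lt hσ hS h1 hM)
  refine ⟨B, C, hB, hBC, fun z hz => lt_of_mem_filter_succ_le (hBC ▸ hz), ?_⟩
  have hlen : M ≤ (P ++ k :: S).length := by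
    rw [hσ.length_eq]; exact hM.le.trans ((hσ.mem_iff (x := k)).1 (by simp)).2
  rw [mc_getD_sub_one h1 hlen, filter_append_cons_of_le hS hM.le, filter_append_cons_of_le hS hM,
    hB, hBC]
  simp only [List.append_assoc, List.cons_append]

/-- Inserting `k` only shifts the descents to its right (`shiftAbove`), which `majInc` at a slot
left of `k` does not see. -/
theorem maj_sub_maj_append_cons_eq {B C : List ℕ} {a : ℕ} (hS : ∀ y ∈ S, k < y)
    (hBC : ∀ x ∈ (B ++ C).getLast?, k < x → ∃ y ∈ S.head?, y < x)
    (ha : ∀ z ∈ B ++ C ++ S, a < z) (hak : a < k) :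
    maj (B ++ a :: (C ++ k :: S)) - maj (B ++ (C ++ k :: S))
      = maj (B ++ a :: (C ++ S)) - maj (B ++ (C ++ S)) := by
  have hak' : ∀ z ∈ B ++ (C ++ k :: S), a < z := by
    intro z hz
    rw [List.mem_append, List.mem_append, List.mem_cons] at hz
    rcases hz with hz | hz | rfl | hz
    exacts [ha z (by simp [hz]), ha z (by simp [hz]), hak, ha z (by simp [hz])]
  rw [maj_append_cons_of_forall_lt hak', maj_append_cons_of_forall_lt (by simpa using ha),
    Nat.add_sub_cancel_left, Nat.add_sub_cancel_left, ← List.append_assoc, ← List.append_assoc,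
    ligne_append_cons_eq_shiftAbove hS hBC, majInc_shiftAbove (by simp)]

/-- Otherwise the slot `j` of `k` would not be a descent of `σ^{(k+1)}`, so `d_k = j + #{descents
after j}` would bound the increase at every slot `≤ j`, in particular `d_{k-1}`. -/
theorem exists_head_lt_of_mc_getD_lt (hσ : IsPermWord n (P ++ k :: S)) (hS : ∀ y ∈ S, k < y)
    (hk : 2 ≤ k) (h : (mc (P ++ k :: S)).getD (k - 1) 0 < (mc (P ++ k :: S)).getD (k - 2) 0) :
    ∀ x ∈ (P.filter (k + 1 ≤ ·)).getLast?, ∃ y ∈ S.head?, y < x := by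
  intro x hx
  by_contra hny
  set A := P.filter (k + 1 ≤ ·)
  set D := ligne (A ++ S)
  have hAD : A.length ∉ D := by
    rw [length_mem_ligne_append_iff]
    rintro ⟨x', hx', hy⟩
    exact hny (Option.mem_unique hx hx' ▸ hy)
  have hkA : ∀ z ∈ A ++ S, k < z := by
    intro z hz
    rcases List.mem_append.1 hz with hz | hz
    exacts [lt_of_mem_filter_succ_le hz, hS z hz]
  have hdk : (mc (P ++ k :: S)).getD (k - 1) 0 = A.length + #(D.filter (A.length < ·)) := by
    rw [mc_getD_sub_one_append_cons hσ hS (by omega), maj_append_cons_of_forall_lt hkA,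
      Nat.add_sub_cancel_left, majInc, if_neg hAD]
  obtain ⟨B, C, -, hBC, hltBC, hcode⟩ :=
    exists_filter_left_eq_append_cons hσ hS (M := k - 1) (by omega) (by omega)
  have hBCA : B ++ C = A := by
    rw [← hBC, Nat.sub_add_cancel (by omega), filter_le_eq_filter_succ_le (notMem_left hσ)]
  have hlt : ∀ z ∈ B ++ (C ++ k :: S), k - 1 < z := by
    intro z hz
    rw [← List.append_assoc, hBCA, List.mem_append, List.mem_cons] at hz
    rcases hz with hz | rfl | hz
    exacts [(Nat.sub_le k 1).trans_lt (hkA z (List.mem_append_left _ hz)), by omega,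
      (Nat.sub_le k 1).trans_lt (hS z hz)]
  have hdk1 : (mc (P ++ k :: S)).getD (k - 2) 0 = majInc (ligneInsMin D A.length) B.length := by
    rw [show k - 2 = k - 1 - 1 by omega, hcode, maj_append_cons_of_forall_lt hlt,
      Nat.add_sub_cancel_left, ← List.append_assoc, hBCA, ligne_append_cons_of_forall_lt hkA]
  have := majInc_ligneInsMin_le (D := D) (show B.length ≤ A.length by simp [← hBCA])
  omega

/-- Below `k` the code of `τ` is that of `σ` shifted by one place, so the letters `M + 1` of `τ`
are inserted exactly where the letters `M` of `σ ∖ {k}` are. -/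
theorem ligne_filter_succ_eq (hτ : IsPermWord n τ) (hσ : IsPermWord n (P ++ k :: S))
    (hS : ∀ y ∈ S, k < y)
    (hK : ∀ x ∈ (P.filter (k + 1 ≤ ·)).getLast?, ∃ y ∈ S.head?, y < x)
    (hcode : ∀ M, 1 ≤ M → M < k → (mc τ).getD M 0 = (mc (P ++ k :: S)).getD (M - 1) 0)
    (htop : ligne (τ.filter (k + 1 ≤ ·)) = ligne (P.filter (k ≤ ·) ++ S))
    {M : ℕ} (h1 : 1 ≤ M) (hM : M ≤ k) :
    ligne (τ.filter (M + 1 ≤ ·)) = ligne (P.filter (M ≤ ·) ++ S) := by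
  have hkn := ((hσ.mem_iff (x := k)).1 (by simp)).2
  induction hM using Nat.decreasingInduction with
  | self => exact htop
  | of_succ M hMk ih =>
    obtain ⟨X, Y, hX, hXY, hlt, hmc⟩ :=
      hτ.exists_filter_le_eq_append_cons (m := M + 1) (by omega) (by omega)
    obtain ⟨B, C, hB, hBC, hltBC, hmcσ⟩ := exists_filter_left_eq_append_cons hσ hS h1 hMk
    have hBCS : ∀ z ∈ B ++ C ++ S, M < z := by
      intro z hz
      rcases List.mem_append.1 hz with hz | hz
      exacts [hltBC z hz, hMk.trans (hS z hz)]
    have hlast := exists_head_lt_of_filter_eq hK (A := B ++ C)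
      (by rw [← hBC, filter_filter_le_of_le (by omega)])
    rw [hX, hB, List.append_assoc, List.cons_append]
    refine ligne_append_cons_eq_of_maj_sub_eq hlt (by simpa using hBCS) ?_ ?_
    · rw [← hXY, ih (by omega), hBC, List.append_assoc]
    · rw [← hmc, Nat.add_sub_cancel, hcode M h1 hMk, hmcσ,
        maj_sub_maj_append_cons_eq hS hlast hBCS hMk]

theorem ligne_eq_of_mc_getD_zero_eq (hτ : IsPermWord n τ) (hσ : IsPermWord n (P ++ k :: S))
    (hS : ∀ y ∈ S, k < y)
    (hK : ∀ x ∈ (P.filter (k + 1 ≤ ·)).getLast?, ∃ y ∈ S.head?, y < x)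
    (hk1 : 1 ≤ k) (h0 : (mc τ).getD 0 0 = (mc (P ++ k :: S)).getD (k - 1) 0)
    (hmid : ligne (τ.filter (1 + 1 ≤ ·)) = ligne (P.filter (1 ≤ ·) ++ S)) :
    ligne (P ++ k :: S) = ligne τ := by
  have hP : P.filter (1 ≤ ·) = P :=
    (List.filter_eq_self (l := P)).2 fun x hx => by
      simpa using ((hσ.mem_iff (x := x)).1 (by simp [hx])).1
  have hdk : (mc (P ++ k :: S)).getD (k - 1) 0 = #((ligne (P ++ S)).filter (P.length < ·)) := by
    rw [mc_getD_sub_one_append_cons hσ hS hk1, maj_append_cons_of_head_lt hS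
      (exists_head_lt_of_filter_eq hK (filter_filter_le_of_le le_rfl)), Nat.add_sub_cancel_left,
      card_filter_ligne_append, card_filter_ligne_append]
  obtain ⟨X, Y, hX, hXY, hlt, hmc⟩ :=
    hτ.exists_filter_le_eq_append_cons le_rfl (hk1.trans ((hσ.mem_iff (x := k)).1 (by simp)).2)
  have hXY' : ligne (X ++ Y) = ligne (P ++ S) := by rw [← hXY, hmid, hP]
  rw [ligne_append_cons_eq_shiftAbove hS (exists_head_lt_of_filter_eq hK rfl),
    ← hτ.filter_one_le, hX,
    ligne_append_cons_eq_shiftAbove_of_maj_sub_eq hlt (q := P.length), hXY']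
  rw [← hmc, Nat.sub_self, h0, hdk, hXY']

end Split

end McCode

open McCode

theorem stmt13_general (n : ℕ) (σ : List ℕ) (hσ : IsPermWord n σ) (k : ℕ)
    (hk1 : 1 ≤ k) (hkn : k ≤ n)
    (C2 : (mc σ).getD (k - 2) 0 > (mc σ).getD (k - 1) 0)
    (C4 : ∀ i : ℕ, 1 ≤ i → i < k → σ.idxOf i < σ.idxOf k) :
    ∀ τ : List ℕ, IsPermWord n τ →
      mc τ = (mc σ).getD (k - 1) 0 :: ((mc σ).take (k - 1) ++ (mc σ).drop k) →
      ligne σ = ligne τ := by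
  intro τ hτ hmcτ
  have hk2 : 2 ≤ k := by
    by_contra hk
    obtain rfl : k = 1 := by omega
    exact lt_irrefl _ C2
  obtain ⟨P, S, rfl⟩ := List.append_of_mem (hσ.mem_iff.2 ⟨hk1, hkn⟩)
  have hS := forall_lt_of_idxOf_lt hσ C4
  have hK := exists_head_lt_of_mc_getD_lt hσ hS hk2 C2
  have hcode : ∀ i, 1 ≤ i →
      (mc τ).getD i 0 = (mc (P ++ k :: S)).getD (if i < k then i - 1 else i) 0 := fun i hi => by
    rw [hmcτ, getD_cons_take_append_drop hk1 (by rw [length_mc, hσ.length_eq]; exact hkn) hi]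
  have htop : ligne (τ.filter (k + 1 ≤ ·)) = ligne (P.filter (k ≤ ·) ++ S) := by
    rw [ligne_filter_eq_of_mc_getD_eq hτ hσ (by omega) fun m hkm _ => by
        rw [hcode (m - 1) (by omega), if_neg (by omega)],
      filter_append_cons_succ hS, filter_le_eq_filter_succ_le (notMem_left hσ)]
  exact ligne_eq_of_mc_getD_zero_eq hτ hσ hS hK hk1 (by rw [hmcτ, List.getD_cons_zero])
    (ligne_filter_succ_eq hτ hσ hS hK (fun M h1 hM => by rw [hcode M h1, if_pos hM]) htop le_rfl
      hk1)

theorem stmt13 (n : ℕ) (σ : List ℕ) (hσ : IsPermWord n σ) (k : ℕ)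
    (hk1 : 1 ≤ k) (hkn : k ≤ n)
    (C1 : ∀ i j : ℕ, i ≤ j → j < k - 1 → (mc σ).getD i 0 ≤ (mc σ).getD j 0)
    (C2 : (mc σ).getD (k - 2) 0 > (mc σ).getD (k - 1) 0)
    (C3 : (mc σ).getD (k - 1) 0 ≤ (mc σ).getD 0 0)
    (C4 : ∀ i : ℕ, 1 ≤ i → i < k → σ.idxOf i < σ.idxOf k) :
    ∀ τ : List ℕ, IsPermWord n τ →
      mc τ = (mc σ).getD (k - 1) 0 :: ((mc σ).take (k - 1) ++ (mc σ).drop k) →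
      ligne σ = ligne τ :=
  stmt13_general n σ hσ k hk1 hkn C2 C4
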